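/- arXiv:1805.04433 — 2 statements merged into one kernel-verified Lean document; each statement's English description precedes it below -/
import Mathlib

section
/- Let a < b, α ∈ (-∞,0) ∪ (1,∞), λ < 0, δ ∈ ℝ, and T(x) = λx + δ. Then for all x ∈ [a,b], f^{T(b),T(a)}_α(T(x)) = 1 - f^{a,b}_{1-α}(x), where f^{u,v}_γ(y) = γ(y-u)/(y+(γ-1)v-γu). -/
/-!
The family `f^{u,v}_γ` is invariant under applying one affine map to `u`, `v` and `y`, since
numerator and denominator both scale by `λ`. With `D = x + (α - 1) a - α b`, one finds
`f^{b,a}_α(x) = α (x - b) / D` and `f^{a,b}_{1-α}(x) = (1 - α) (x - a) / D`, whose numerators add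
up to `D`; and `D ≠ 0` on `[a, b]` because `x - a ∈ [0, b - a]` while `α (b - a) ∉ [0, b - a]`.
-/

/-- The paper's `f^{u,v}_γ(y)`. -/
noncomputable def linFrac (γ u v y : ℝ) : ℝ := γ * (y - u) / (y + (γ - 1) * v - γ * u)

theorem linFrac_affine (γ u v y lam δ : ℝ) (hlam : lam ≠ 0) :
    linFrac γ (lam * u + δ) (lam * v + δ) (lam * y + δ) = linFrac γ u v y := by
  unfold linFrac
  rw [← mul_div_mul_left (γ * (y - u)) _ hlam]
  congr 1 <;> ring

theorem linFrac_add_linFrac_one_sub (α u v y : ℝ) (hD : y + (α - 1) * u - α * v ≠ 0) :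
    linFrac α v u y + linFrac (1 - α) u v y = 1 := by
  unfold linFrac
  have hD' : y + (1 - α - 1) * v - (1 - α) * u = y + (α - 1) * u - α * v := by ring
  rw [hD', ← add_div, div_eq_one_iff_eq hD]
  ring

theorem linFrac_denom_ne_zero_of_mem_Icc {a b α x : ℝ} (hab : a < b) (hα : α < 0 ∨ 1 < α)
    (hx : x ∈ Set.Icc a b) : x + (α - 1) * a - α * b ≠ 0 := by
  obtain ⟨hxa, hxb⟩ := hx
  rcases hα with hα | hα <;> nlinarith

theorem stmt_9 (a b α lam δ : ℝ) (hab : a < b) (hα : α < 0 ∨ 1 < α)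
    (hlam : lam < 0)
    (f : ℝ → ℝ → ℝ → ℝ → ℝ)
    (hf : ∀ γ u v y, f γ u v y = γ * (y - u) / (y + (γ - 1) * v - γ * u))
    (T : ℝ → ℝ) (hT : ∀ x, T x = lam * x + δ) :
    ∀ x ∈ Set.Icc a b, f α (T b) (T a) (T x) = 1 - f (1 - α) a b x := by
  intro x hx
  have hf' : f = linFrac := by
    funext γ u v y
    exact hf γ u v y
  rw [hf', hT, hT, hT, linFrac_affine _ _ _ _ _ _ hlam.ne, eq_sub_iff_add_eq]
  exact linFrac_add_linFrac_one_sub α a b x (linFrac_denom_ne_zero_of_mem_Icc hab hα hx)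
end

section
/- Let a < b and α < 0. Then f_α(x) = α(x-a)/(x+(α-1)b-αa) is convex on [a,b]. -/
theorem stmt_12 (a b α : ℝ) (hab : a < b) (hα : α < 0) :
    ConvexOn ℝ (Set.Icc a b)
      (fun x : ℝ => α * (x - a) / (x + (α - 1) * b - α * a)) := by
  constructor
  · exact convex_Icc a b
  · intro x hx y hy s t hs ht hst
    obtain ⟨hx1, hx2⟩ := hx
    obtain ⟨hy1, hy2⟩ := hy
    have ht' : t = 1 - s := by linarith
    subst ht'
    have hs1 : s ≤ 1 := by linarith
    have hdx : x + (α - 1) * b - α * a < 0 := by nlinarith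
    have hdy : y + (α - 1) * b - α * a < 0 := by nlinarith
    have hdz : (s * x + (1 - s) * y) + (α - 1) * b - α * a < 0 := by
      nlinarith [mul_nonneg hs (neg_pos.mpr hdx).le,
        mul_nonneg (by linarith : (0:ℝ) ≤ 1 - s) (neg_pos.mpr hdy).le]
    simp only [smul_eq_mul]
    rw [div_le_iff_of_neg hdz, ← sub_nonneg]
    have heq : α * (s * x + (1 - s) * y - a) -
        (s * (α * (x - a) / (x + (α - 1) * b - α * a)) +
          (1 - s) * (α * (y - a) / (y + (α - 1) * b - α * a))) *
          (s * x + (1 - s) * y + (α - 1) * b - α * a) =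
        (α * (α - 1) * (b - a)) * (s * (1 - s) * (x - y) ^ 2) /
          ((x + (α - 1) * b - α * a) * (y + (α - 1) * b - α * a)) := by
      rw [eq_div_iff (mul_pos_of_neg_of_neg hdx hdy).ne']
      field_simp [hdx.ne, hdy.ne]
      ring
    rw [heq]
    apply div_nonneg
    · apply mul_nonneg
      · nlinarith
      · have : 0 ≤ s * (1 - s) := mul_nonneg hs (by linarith)
        positivity
    · exact (mul_pos_of_neg_of_neg hdx hdy).le
end
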